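/- arXiv:2503.07793 — 6 statements merged into one kernel-verified Lean document; each statement's English description precedes it below -/
import Mathlib

section
/- Let A, B, C, D be positive integers such that A·C is not a perfect square. Then the equation A·u² − B·u − C·v² + D·v = 0 has infinitely many integer solutions (u, v). -/
theorem stmt_10 (A B C D : ℤ) (hA : 0 < A) (hB : 0 < B) (hC : 0 < C) (hD : 0 < D)
    (hsq : ¬ ∃ k : ℤ, A * C = k ^ 2) :
    {uv : ℤ × ℤ | A * uv.1 ^ 2 - B * uv.1 - C * uv.2 ^ 2 + D * uv.2 = 0}.Infinite := by
  have hd : ¬ IsSquare (A * C) := by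
    rintro ⟨k, hk⟩
    exact hsq ⟨k, by rw [hk]; ring⟩
  obtain ⟨a, hax, hay⟩ :=
    Pell.Solution₁.exists_pos_of_not_isSquare (mul_pos hA hC) hd
  set X : ℕ → ℤ := fun n => (a ^ (n + 1)).x with hX
  set Y : ℕ → ℤ := fun n => (a ^ (n + 1)).y with hY
  have hXpos : ∀ n, 0 < X n := fun n => Pell.Solution₁.x_pow_pos (by linarith) _
  have hYpos : ∀ n, 0 < Y n := fun n => Pell.Solution₁.y_pow_succ_pos (by linarith) hay n
  have hprop : ∀ n, (X n) ^ 2 - A * C * (Y n) ^ 2 = 1 := fun n => (a ^ (n + 1)).prop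
  have hXmono : StrictMono X := by
    apply strictMono_nat_of_lt_succ
    intro n
    have h1 : a ^ (n + 1 + 1) = a ^ (n + 1) * a := pow_succ a (n + 1)
    have h2 : X (n + 1) = X n * a.x + A * C * (Y n * a.y) := by
      simp only [hX, hY, h1, Pell.Solution₁.x_mul]
    rw [h2]
    have h3 : 0 < A * C * (Y n * a.y) := mul_pos (mul_pos hA hC) (mul_pos (hYpos n) hay)
    have h4 := mul_lt_mul_of_pos_left hax (hXpos n)
    linarith
  have hYmono : StrictMono Y := by
    apply strictMono_nat_of_lt_succ
    intro n
    have h1 : a ^ (n + 1 + 1) = a ^ (n + 1) * a := pow_succ a (n + 1)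
    have h2 : Y (n + 1) = X n * a.y + Y n * a.x := by
      simp only [hX, hY, h1, Pell.Solution₁.y_mul]
    rw [h2]
    have h3 : 0 < X n * a.y := mul_pos (hXpos n) hay
    have h4 := mul_lt_mul_of_pos_left hax (hYpos n)
    linarith
  set f : ℕ → ℤ × ℤ := fun n =>
    (-(B * C * (Y n) ^ 2 + D * X n * Y n), -(B * X n * Y n + A * D * (Y n) ^ 2)) with hf
  apply Set.infinite_of_injective_forall_mem (f := f)
  · intro m n hmn
    by_contra hne
    have hinj : ∀ p q : ℕ, p < q → (f p).1 > (f q).1 := by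
      intro p q hpq
      have h1 : Y p < Y q := hYmono hpq
      have h2 : X p < X q := hXmono hpq
      have := hXpos p; have := hYpos p; have := hXpos q; have := hYpos q
      have h5 : X p * Y p < X q * Y q := by nlinarith
      have h6 : Y p ^ 2 < Y q ^ 2 := by nlinarith
      have h7 := mul_lt_mul_of_pos_left h5 hD
      have h8 := mul_lt_mul_of_pos_left h6 (mul_pos hB hC)
      simp only [hf]
      nlinarith
    rcases lt_or_gt_of_ne hne with h | h
    · have := hinj m n h
      rw [hmn] at this
      exact absurd this (lt_irrefl _)
    · have := hinj n m h
      rw [hmn] at this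
      exact absurd this (lt_irrefl _)
  · intro n
    simp only [hf, Set.mem_setOf_eq]
    have hp := hprop n
    linear_combination (A * D ^ 2 - B ^ 2 * C) * (Y n) ^ 2 * hp
end

section
/- Let P ∈ ℤ[x] be a nonconstant polynomial such that P(n) is a perfect square for all sufficiently large positive integers n. Then there exists a polynomial Q ∈ ℤ[x] such that P = Q². -/
/-!
Replacing `P` by `P(X²)`, we may assume that `deg P = 2m` is even. The leading coefficient is
then positive, and there is a real polynomial `Q` of degree `m` with `deg (P - Q²) < m`, so the
integer square roots `g n = √(P n)` satisfy `g n - Q n → 0`. The `(m+1)`-st forward difference of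
`g` is then an integer sequence tending to `0`, hence eventually `0`, and Newton's interpolation
formula turns `m! • g` into the values of an integer polynomial `R` for large `n`. Thus
`R² = (m!)² P`, and `P` is a square by unique factorization in `ℤ[X]`.

Finally, if `P(X²) = Q²`, comparing even and odd parts gives `P = T²` or `P = X S²`; the latter is
impossible because `p S(p)²` is a square for a prime `p` only when `S(p) = 0`.
-/

open Polynomial Filter Topology

section FwdDiff

variable {M M' G G' : Type*} [AddCommMonoid M] [AddCommMonoid M'] [AddCommGroup G]
  [AddCommGroup G']

lemma AddMonoidHom.comp_fwdDiff_iter (χ : G →+ G') (h : M) (f : M → G) (n : ℕ) :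
    χ ∘ (fwdDiff h)^[n] f = (fwdDiff h)^[n] (χ ∘ f) := by
  ext y
  simp [fwdDiff_iter_eq_sum_shift, map_sum, map_zsmul]

lemma fwdDiff_iter_comp_addMonoidHom (ψ : M →+ M') (h : M) (f : M' → G) (n : ℕ) :
    (fwdDiff h)^[n] (f ∘ ψ) = (fwdDiff (ψ h))^[n] f ∘ ψ := by
  ext y
  simp [fwdDiff_iter_eq_sum_shift, map_add, map_nsmul]

lemma Filter.Tendsto.fwdDiff_iter [TopologicalSpace G] [IsTopologicalAddGroup G]
    {f : ℕ → G} (hf : Tendsto f atTop (𝓝 0)) (h n : ℕ) :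
    Tendsto ((fwdDiff h)^[n] f) atTop (𝓝 0) := by
  induction n generalizing f with
  | zero => exact hf
  | succ n ih =>
    rw [Function.iterate_succ_apply]
    apply ih
    show Tendsto (fun x => f (x + h) - f x) atTop (𝓝 0)
    simpa using (hf.comp (tendsto_add_atTop_nat h)).sub hf

lemma fwdDiff_iter_eq_zero_of_forall_ge {f : ℕ → G} {k M : ℕ}
    (hf : ∀ n ≥ M, (fwdDiff 1)^[k] f n = 0) {i : ℕ} (hi : k ≤ i) : (fwdDiff 1)^[i] f M = 0 := by
  obtain ⟨j, rfl⟩ := Nat.exists_eq_add_of_le' hi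
  rw [Function.iterate_add_apply, fwdDiff_iter_eq_sum_shift]
  exact Finset.sum_eq_zero fun l _ => by rw [hf _ (by omega), smul_zero]

lemma shift_eq_sum_range_fwdDiff_iter {f : ℕ → G} {k M : ℕ}
    (hf : ∀ n ≥ M, (fwdDiff 1)^[k + 1] f n = 0) (n : ℕ) :
    f (M + n) = ∑ i ∈ Finset.range (k + 1), n.choose i • (fwdDiff 1)^[i] f M := by
  have extend : ∀ s, s ⊆ Finset.range (n + k + 1) →
      (∀ i < n + k + 1, i ∉ s → n.choose i • (fwdDiff 1)^[i] f M = 0) →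
      ∑ i ∈ s, n.choose i • (fwdDiff 1)^[i] f M
        = ∑ i ∈ Finset.range (n + k + 1), n.choose i • (fwdDiff 1)^[i] f M :=
    fun s hs h0 => Finset.sum_subset hs fun i hi his => h0 i (Finset.mem_range.1 hi) his
  have newton := shift_eq_sum_fwdDiff_iter 1 f n M
  rw [smul_eq_mul, mul_one] at newton
  rw [newton]
  refine (extend _ (Finset.range_subset_range.2 (by omega)) ?_).trans
    (extend _ (Finset.range_subset_range.2 (by omega)) ?_).symm
  · intro i _ hi
    rw [Nat.choose_eq_zero_of_lt (by simpa using hi), zero_smul]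
  · intro i _ hi
    rw [fwdDiff_iter_eq_zero_of_forall_ge hf (by simpa using hi), smul_zero]

lemma exists_eval_eq_factorial_mul_of_fwdDiff_iter_eq_zero {f : ℕ → ℤ} {k M : ℕ}
    (hf : ∀ n ≥ M, (fwdDiff 1)^[k + 1] f n = 0) :
    ∃ Q : ℤ[X], ∀ n ≥ M, Q.eval (n : ℤ) = k.factorial * f n := by
  -- `descPochhammer ℤ i` takes the value `i! * n.choose i` at `n`; the factor `k!` clears `i!`.
  refine ⟨(∑ i ∈ Finset.range (k + 1),
    C (((k.factorial / i.factorial : ℕ) : ℤ) * (fwdDiff 1)^[i] f M) * descPochhammer ℤ i).comp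
      (X - C (M : ℤ)), fun n hn => ?_⟩
  obtain ⟨j, rfl⟩ := Nat.exists_eq_add_of_le hn
  rw [shift_eq_sum_range_fwdDiff_iter hf j, Finset.mul_sum, eval_comp, eval_finsetSum]
  simp only [eval_sub, eval_X, eval_C, eval_mul, Nat.cast_add, add_sub_cancel_left,
    descPochhammer_eval_eq_descFactorial, Nat.descFactorial_eq_factorial_mul_choose, nsmul_eq_mul]
  refine Finset.sum_congr rfl fun i hi => ?_
  have hik : (k.factorial / i.factorial) * i.factorial = k.factorial :=
    Nat.div_mul_cancel (Nat.factorial_dvd_factorial (Finset.mem_range_succ_iff.1 hi))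
  generalize k.factorial / i.factorial = a at hik
  rw [← hik]
  push_cast
  ring

end FwdDiff

lemma eventually_eq_zero_of_tendsto_intCast {α : Type*} {l : Filter α} {f : α → ℤ}
    (hf : Tendsto (fun a => (f a : ℝ)) l (𝓝 0)) : ∀ᶠ a in l, f a = 0 := by
  have : Tendsto f l (𝓝 0) := by
    rw [Int.isClosedEmbedding_coe_real.isInducing.tendsto_nhds_iff]
    exact_mod_cast hf
  simpa [nhds_discrete] using this

lemma Polynomial.fwdDiff_iter_eval_natCast_eq_zero {R : Type*} [CommRing R] {Q : R[X]} {n : ℕ}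
    (hQ : Q.natDegree < n) : (fwdDiff 1)^[n] (fun k : ℕ => Q.eval (k : R)) = 0 := by
  have h := fwdDiff_iter_comp_addMonoidHom (Nat.castAddMonoidHom R) 1 Q.eval n
  simp only [Function.comp_def, Nat.coe_castAddMonoidHom, Nat.cast_one] at h
  rw [h, Polynomial.fwdDiff_iter_eq_zero_of_degree_lt hQ]
  rfl

lemma exists_eval_eq_factorial_mul_of_tendsto_sub_eval {g : ℕ → ℤ} {Q : ℝ[X]}
    (hg : Tendsto (fun n => (g n : ℝ) - Q.eval (n : ℝ)) atTop (𝓝 0)) :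
    ∃ R : ℤ[X], ∃ M : ℕ, ∀ n ≥ M, R.eval (n : ℤ) = Q.natDegree.factorial * g n := by
  have hdiff :
      Tendsto (fun n : ℕ => (((fwdDiff 1)^[Q.natDegree + 1] g n : ℤ) : ℝ)) atTop (𝓝 0) := by
    have hsplit : (fun n : ℕ => (g n : ℝ)) =
        (fun n : ℕ => Q.eval (n : ℝ)) + fun n : ℕ => (g n : ℝ) - Q.eval (n : ℝ) := by
      ext; simp
    have hcast := AddMonoidHom.comp_fwdDiff_iter (Int.castAddHom ℝ) 1 g (Q.natDegree + 1)
    simp only [Function.comp_def, Int.coe_castAddHom] at hcast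
    rw [hcast, hsplit, fwdDiff_iter_add,
      Q.fwdDiff_iter_eval_natCast_eq_zero (Nat.lt_succ_self _), zero_add]
    exact hg.fwdDiff_iter 1 _
  obtain ⟨M, hM⟩ := eventually_atTop.1 (eventually_eq_zero_of_tendsto_intCast hdiff)
  obtain ⟨R, hR⟩ := exists_eval_eq_factorial_mul_of_fwdDiff_iter_eq_zero hM
  exact ⟨R, M, hR⟩

section SquareRootApproximation

variable {K : Type*} [Field K] [NeZero (2 : K)]

lemma exists_degree_sub_sq_add_C_mul_X_pow_lt (p Q : K[X]) {m e : ℕ} (he : e < m)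
    (hQ : Q.natDegree = m) (hr : (p - Q ^ 2).degree < (m + e + 1 : ℕ)) :
    ∃ t : K, (p - (Q + C t * X ^ e) ^ 2).degree < ((m + e : ℕ) : WithBot ℕ) := by
  have hQ0 : Q.leadingCoeff ≠ 0 := leadingCoeff_ne_zero.2 (by rintro rfl; simp at hQ; omega)
  generalize hr_def : p - Q ^ 2 = r at hr
  refine ⟨r.coeff (m + e) / (2 * Q.leadingCoeff), ?_⟩
  set t := r.coeff (m + e) / (2 * Q.leadingCoeff) with ht
  have hexp : p - (Q + C t * X ^ e) ^ 2
      = r - C (2 * t) * (X ^ e * Q) - C (t ^ 2) * X ^ (2 * e) := by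
    rw [← hr_def]
    simp only [C_mul, C_pow, C_ofNat]
    ring
  rw [hexp, degree_lt_iff_coeff_zero]
  intro k hk
  simp only [coeff_sub, coeff_C_mul, coeff_X_pow_mul', coeff_X_pow]
  rw [if_pos (by omega), if_neg (by omega), mul_zero, sub_zero]
  rcases hk.eq_or_lt with rfl | hlt
  · rw [show m + e - e = Q.natDegree by omega, ← leadingCoeff, ht]
    field_simp
    ring
  · rw [coeff_eq_zero_of_degree_lt (hr.trans_le (by exact_mod_cast hlt)),
      coeff_eq_zero_of_natDegree_lt (by omega : Q.natDegree < k - e)]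
    ring

lemma exists_degree_sub_sq_lt (p : K[X]) {m : ℕ} (hp : p.natDegree = 2 * m) {b : K}
    (hb : b ≠ 0) (hb2 : b ^ 2 = p.leadingCoeff) :
    ∃ Q : K[X], Q.natDegree = m ∧ Q.leadingCoeff = b ∧ (p - Q ^ 2).degree < m := by
  suffices h : ∀ j ≤ m, ∃ Q : K[X], Q.natDegree = m ∧ Q.leadingCoeff = b ∧
      (p - Q ^ 2).degree < (2 * m - j : ℕ) by
    simpa [show 2 * m - m = m by omega] using h m le_rfl
  intro j hj
  induction j with
  | zero =>
    refine ⟨C b * X ^ m, natDegree_C_mul_X_pow _ _ hb, leadingCoeff_C_mul_X_pow _ _, ?_⟩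
    have hp0 : p ≠ 0 := by
      rintro rfl
      simp [hb] at hb2
    have hsq : (C b * X ^ m) ^ 2 = C p.leadingCoeff * X ^ (2 * m) := by
      rw [← hb2, C_pow]; ring
    rw [hsq, Nat.sub_zero, ← hp, ← degree_eq_natDegree hp0]
    exact degree_sub_lt_left (by rw [degree_C_mul_X_pow _ (leadingCoeff_ne_zero.2 hp0),
      degree_eq_natDegree hp0, hp]) hp0 (by rw [leadingCoeff_C_mul_X_pow])
  | succ j ih =>
    obtain ⟨Q, hQ, hQb, hr⟩ := ih (by omega)
    obtain ⟨t, ht⟩ :=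
      exists_degree_sub_sq_add_C_mul_X_pow_lt p Q (e := m - j - 1) (by omega) hQ
        (by rwa [show m + (m - j - 1) + 1 = 2 * m - j by omega])
    have hlow : (C t * X ^ (m - j - 1)).degree < Q.degree := by
      rw [degree_eq_natDegree (p := Q) (by rintro rfl; simp at hQ; omega), hQ]
      exact (degree_C_mul_X_pow_le _ _).trans_lt (by exact_mod_cast (by omega))
    refine ⟨Q + C t * X ^ (m - j - 1), ?_, ?_, ?_⟩
    · rw [natDegree_add_eq_left_of_degree_lt hlow, hQ]
    · rw [leadingCoeff_add_of_degree_lt' hlow, hQb]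
    · rwa [show 2 * m - (j + 1) = m + (m - j - 1) by omega]

end SquareRootApproximation

lemma leadingCoeff_pos_of_eventually_eval_nonneg {p : ℝ[X]} (hp : 0 < p.degree)
    (h : ∀ᶠ n : ℕ in atTop, 0 ≤ p.eval (n : ℝ)) : 0 < p.leadingCoeff := by
  by_contra! hlc
  have hneg := ((p.tendsto_atBot_of_leadingCoeff_nonpos hp hlc).comp
    tendsto_natCast_atTop_atTop).eventually_lt_atBot 0
  obtain ⟨n, hn, hn'⟩ := (h.and hneg).exists
  exact (hn.trans_lt hn').false

lemma tendsto_sub_eval_of_sq_eq_eval {p Q : ℝ[X]} (hQ : 0 < Q.degree)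
    (hQlc : 0 ≤ Q.leadingCoeff) (hdeg : (p - Q ^ 2).degree < Q.degree) {u : ℕ → ℝ}
    (hu : ∀ᶠ n in atTop, 0 ≤ u n ∧ u n ^ 2 = p.eval (n : ℝ)) :
    Tendsto (fun n => u n - Q.eval (n : ℝ)) atTop (𝓝 0) := by
  have hQpos : ∀ᶠ n : ℕ in atTop, 0 < Q.eval (n : ℝ) :=
    ((Q.tendsto_atTop_of_leadingCoeff_nonneg hQ hQlc).comp
      tendsto_natCast_atTop_atTop).eventually_gt_atTop 0
  have hratio :
      Tendsto (fun n : ℕ => |(p - Q ^ 2).eval (n : ℝ) / Q.eval (n : ℝ)|) atTop (𝓝 0) := by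
    simpa using ((div_tendsto_atTop_zero_of_degree_lt _ _ hdeg).comp
      tendsto_natCast_atTop_atTop).abs
  refine squeeze_zero_norm' ?_ hratio
  filter_upwards [hu, hQpos] with n ⟨hu0, hu2⟩ hQn
  have hfactor :
      (u n - Q.eval (n : ℝ)) * (u n + Q.eval (n : ℝ)) = (p - Q ^ 2).eval (n : ℝ) := by
    rw [eval_sub, eval_pow, ← hu2]; ring
  rw [Real.norm_eq_abs, eq_div_of_mul_eq (by positivity) hfactor, abs_div, abs_div,
    abs_of_pos (by positivity : 0 < u n + Q.eval (n : ℝ)), abs_of_pos hQn]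
  exact div_le_div_of_nonneg_left (abs_nonneg _) hQn (by linarith)

lemma Polynomial.eq_of_frequently_eval_natCast_eq {R : Type*} [CommRing R] [IsDomain R]
    [CharZero R] {p q : R[X]} (h : ∃ᶠ n : ℕ in atTop, p.eval (n : R) = q.eval (n : R)) :
    p = q := by
  refine eq_of_infinite_eval_eq p q (Set.Infinite.mono ?_
    ((Nat.frequently_atTop_iff_infinite.1 h).image Nat.cast_injective.injOn))
  rintro _ ⟨n, hn, rfl⟩
  exact hn

lemma exists_eq_sq_of_sq_mul_eq_sq {R : Type*} [CommMonoidWithZero R]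
    [UniqueFactorizationMonoid R] {a b x : R} (ha : a ≠ 0) (h : a ^ 2 * x = b ^ 2) :
    ∃ y, x = y ^ 2 := by
  obtain ⟨y, rfl⟩ := (UniqueFactorizationMonoid.pow_dvd_pow_iff_dvd two_ne_zero).1 ⟨x, h.symm⟩
  exact ⟨y, mul_left_cancel₀ (pow_ne_zero 2 ha) (by rw [h, mul_pow])⟩

theorem exists_eq_sq_of_eventually_eval_eq_sq {P : ℤ[X]} {m : ℕ} (hm : m ≠ 0)
    (hP : P.natDegree = 2 * m) (h : ∀ᶠ n : ℕ in atTop, ∃ k : ℤ, P.eval (n : ℤ) = k ^ 2) :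
    ∃ Q : ℤ[X], P = Q ^ 2 := by
  set p := P.map (Int.castRingHom ℝ)
  have hp_eval (n : ℕ) : p.eval (n : ℝ) = P.eval (n : ℤ) := by
    rw [← Int.cast_natCast, eval_intCast_map]
    rfl
  have hpdeg : p.natDegree = 2 * m := by
    rw [natDegree_map_eq_of_injective (RingHom.injective_int _), hP]
  set g : ℕ → ℤ := fun n => Int.sqrt (P.eval (n : ℤ))
  have hg : ∀ᶠ n in atTop, g n ^ 2 = P.eval (n : ℤ) := h.mono fun n ⟨k, hk⟩ => by
    rw [sq, ← Int.exists_mul_self]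
    exact ⟨k, by rw [hk, sq]⟩
  have hplc : 0 < p.leadingCoeff := by
    refine leadingCoeff_pos_of_eventually_eval_nonneg
      (natDegree_pos_iff_degree_pos.1 (by omega)) (hg.mono fun n hn => ?_)
    rw [hp_eval, ← hn]
    positivity
  obtain ⟨Q, hQdeg, hQlc, hQapprox⟩ := exists_degree_sub_sq_lt p hpdeg
    (Real.sqrt_pos.2 hplc).ne' (Real.sq_sqrt hplc.le)
  have hQdeg' : Q.degree = m := by
    rw [degree_eq_natDegree (by rintro rfl; simp at hQdeg; omega), hQdeg]
  have hlim : Tendsto (fun n => (g n : ℝ) - Q.eval (n : ℝ)) atTop (𝓝 0) := by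
    refine tendsto_sub_eval_of_sq_eq_eval (by rw [hQdeg']; exact_mod_cast Nat.pos_of_ne_zero hm)
      (by rw [hQlc]; positivity) (by rwa [hQdeg'])
      (hg.mono fun n hn => ⟨Int.cast_nonneg (Int.sqrt_nonneg _), ?_⟩)
    rw [hp_eval, ← hn]
    push_cast
    rfl
  obtain ⟨R, M, hR⟩ := exists_eval_eq_factorial_mul_of_tendsto_sub_eval hlim
  refine exists_eq_sq_of_sq_mul_eq_sq (a := C (m.factorial : ℤ)) (b := R)
    (C_ne_zero.2 (by positivity)) (eq_of_frequently_eval_natCast_eq ?_)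
  refine ((hg.and (eventually_ge_atTop M)).mono fun n ⟨hn, hnM⟩ => ?_).frequently
  rw [eval_mul, eval_pow, eval_pow, eval_C, hR n hnM, ← hn, hQdeg]
  ring

section EvenOddParts

variable {R : Type*} [CommRing R]

lemma coeff_expand_two_add_X_mul_expand_two_two_mul (A B : R[X]) (i : ℕ) :
    (expand R 2 A + X * expand R 2 B).coeff (2 * i) = A.coeff i := by
  rcases i with _ | i
  · simp [coeff_expand]
  · rw [coeff_add, coeff_expand_mul' two_pos, show 2 * (i + 1) = (2 * i + 1) + 1 by ring,
      coeff_X_mul, coeff_expand two_pos, if_neg (by omega), add_zero]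

lemma coeff_expand_two_add_X_mul_expand_two_two_mul_add_one (A B : R[X]) (i : ℕ) :
    (expand R 2 A + X * expand R 2 B).coeff (2 * i + 1) = B.coeff i := by
  rw [coeff_add, coeff_X_mul, coeff_expand_mul' two_pos, coeff_expand two_pos, if_neg (by omega),
    zero_add]

lemma eq_expand_two_add_X_mul_expand_two (Q : R[X]) :
    Q = expand R 2 (contract 2 Q) + X * expand R 2 (contract 2 Q.divX) := by
  ext k
  obtain ⟨i, rfl | rfl⟩ := Nat.even_or_odd' k
  · rw [coeff_expand_two_add_X_mul_expand_two_two_mul, coeff_contract two_ne_zero, mul_comm]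
  · rw [coeff_expand_two_add_X_mul_expand_two_two_mul_add_one, coeff_contract two_ne_zero,
      coeff_divX, mul_comm]

lemma expand_two_add_X_mul_expand_two_inj {A B A' B' : R[X]}
    (h : expand R 2 A + X * expand R 2 B = expand R 2 A' + X * expand R 2 B') :
    A = A' ∧ B = B' := by
  constructor <;> ext i
  · rw [← coeff_expand_two_add_X_mul_expand_two_two_mul A B, h,
      coeff_expand_two_add_X_mul_expand_two_two_mul]
  · rw [← coeff_expand_two_add_X_mul_expand_two_two_mul_add_one A B, h,
      coeff_expand_two_add_X_mul_expand_two_two_mul_add_one]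

lemma exists_eq_sq_or_eq_X_mul_sq_of_expand_two_eq_sq [IsDomain R] [NeZero (2 : R)]
    {P Q : R[X]} (h : expand R 2 P = Q ^ 2) : (∃ T, P = T ^ 2) ∨ ∃ S, P = X * S ^ 2 := by
  set T := contract 2 Q
  set S := contract 2 Q.divX
  have hsplit : expand R 2 P + X * expand R 2 0
      = expand R 2 (T ^ 2 + X * S ^ 2) + X * expand R 2 (2 * T * S) := by
    rw [map_zero, mul_zero, add_zero, h, eq_expand_two_add_X_mul_expand_two Q]
    simp only [map_add, map_mul, map_pow, expand_X, map_ofNat]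
    ring
  obtain ⟨hP, hTS⟩ := expand_two_add_X_mul_expand_two_inj hsplit
  rcases mul_eq_zero.1 hTS.symm with hT | hS
  · have h2 : (2 : R[X]) ≠ 0 := by
      rw [← C_ofNat]
      exact C_ne_zero.2 two_ne_zero
    have hT0 : T = 0 := (mul_eq_zero.1 hT).resolve_left h2
    exact .inr ⟨S, by simpa [hT0] using hP⟩
  · exact .inl ⟨T, by simpa [hS] using hP⟩

end EvenOddParts

lemma Int.eq_zero_of_prime_mul_sq_eq_sq {p : ℕ} (hp : p.Prime) {s k : ℤ}
    (h : p * s ^ 2 = k ^ 2) : s = 0 := by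
  by_contra hs
  refine hp.prime.not_isSquare (Rat.isSquare_natCast_iff.1 ⟨k / s, ?_⟩)
  have h' : ((p : ℤ) : ℚ) * (s : ℚ) ^ 2 = (k : ℚ) ^ 2 := by exact_mod_cast h
  field_simp
  push_cast at h'
  linear_combination h'

lemma Polynomial.eq_zero_of_eventually_eval_X_mul_sq_eq_sq {S : ℤ[X]}
    (h : ∀ᶠ n : ℕ in atTop, ∃ k : ℤ, (X * S ^ 2).eval (n : ℤ) = k ^ 2) : S = 0 := by
  refine eq_of_frequently_eval_natCast_eq ?_
  refine ((Nat.frequently_atTop_iff_infinite.2 Nat.infinite_setOfPred_prime).and_eventually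
    h).mono ?_
  rintro n ⟨hn, k, hk⟩
  rw [eval_mul, eval_X, eval_pow] at hk
  simpa using Int.eq_zero_of_prime_mul_sq_eq_sq hn hk

theorem stmt_12 (P : ℤ[X]) (hP : 0 < P.natDegree)
    (h : ∃ N : ℕ, ∀ n : ℕ, N ≤ n → ∃ k : ℤ, P.eval (n : ℤ) = k ^ 2) :
    ∃ Q : ℤ[X], P = Q ^ 2 := by
  obtain ⟨N, hN⟩ := h
  have hsq : ∀ᶠ n : ℕ in atTop, ∃ k : ℤ, (expand ℤ 2 P).eval (n : ℤ) = k ^ 2 :=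
    eventually_atTop.2 ⟨N, fun n hn => by
      simpa [expand_eval] using hN (n ^ 2) (hn.trans (Nat.le_self_pow two_ne_zero n))⟩
  obtain ⟨Q, hQ⟩ := exists_eq_sq_of_eventually_eval_eq_sq hP.ne'
    ((natDegree_expand 2 P).trans (mul_comm _ _)) hsq
  rcases exists_eq_sq_or_eq_X_mul_sq_of_expand_two_eq_sq hQ with hT | ⟨S, rfl⟩
  · exact hT
  · rw [eq_zero_of_eventually_eval_X_mul_sq_eq_sq (eventually_atTop.2 ⟨N, hN⟩)] at hP
    simp at hP
end

section
/- Let m be a positive integer and P(x) = x^m − 1. Then P ∈ 𝒫, i.e., there are infinitely many positive integers n such that n^m − 1 divides n!. -/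
/-!
Take `n = b ^ P`, so that `n ^ m - 1 = b ^ K - 1` with `K = m * P`. A prime `q` dividing
`b ^ K - 1` divides some `Φ_d(b)` with `d ∣ K`, hence `q ≤ (b + 1) ^ φ K ≤ b ^ (2 φ K)`, and
its exponent `v` is below `b` as soon as `b ^ K ≤ 2 ^ b`. Because `∑ 1/p` diverges, `P` can
be chosen with `2 φ(m P) < P` (a multiple of many small primes), and then `q * v ≤ b ^ P = n`,
so `q ^ v ∣ n!` by Legendre's formula.
-/
open Finset Polynomial Nat

theorem Nat.Prime.pow_dvd_factorial_of_mul_le {p v n : ℕ} (hp : p.Prime) (h : p * v ≤ n) :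
    p ^ v ∣ n ! :=
  (pow_dvd_iff_le_emultiplicity.2 <| by
    rw [hp.emultiplicity_factorial_mul]; exact le_add_self).trans (factorial_dvd_factorial h)

theorem Nat.Prime.le_add_one_pow_totient_of_dvd_pow_sub_one {q b K : ℕ} (hq : q.Prime)
    (hb : 1 < b) (hK : 0 < K) (h : q ∣ b ^ K - 1) : q ≤ (b + 1) ^ φ K := by
  have hprod : ((b ^ K - 1 : ℕ) : ℤ) = ∏ d ∈ K.divisors, (cyclotomic d ℤ).eval (b : ℤ) := by
    have := congrArg (eval (b : ℤ)) (prod_cyclotomic_eq_X_pow_sub_one hK ℤ)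
    simp only [eval_prod, eval_sub, eval_pow, eval_X, eval_one] at this
    rw [this, Nat.cast_sub (one_le_pow _ _ (by omega))]
    push_cast; rfl
  obtain ⟨d, hd, hqd⟩ := (Nat.prime_iff_prime_int.mp hq).exists_mem_finset_dvd
    (hprod ▸ Int.natCast_dvd_natCast.mpr h)
  have hdK : d ∣ K := dvd_of_mem_divisors hd
  have hq_le_eval : (q : ℝ) ≤ (cyclotomic d ℝ).eval (b : ℝ) := by
    have := Int.le_of_dvd (cyclotomic_pos' d (by exact_mod_cast hb)) hqd
    calc (q : ℝ) ≤ (((cyclotomic d ℤ).eval (b : ℤ) : ℤ) : ℝ) := by exact_mod_cast this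
      _ = (cyclotomic d ℝ).eval (b : ℝ) := by
        simpa using (cyclotomic.eval_apply (b : ℤ) d (Int.castRingHom ℝ)).symm
  have hbR : (1 : ℝ) < b := by exact_mod_cast hb
  have := hq_le_eval.trans <| (cyclotomic_eval_le_add_one_pow_totient hbR d).trans <|
    pow_le_pow_right₀ (by linarith) (Nat.le_of_dvd (totient_pos.2 hK) (totient_dvd_of_dvd hdK))
  exact_mod_cast this

theorem Nat.totient_le_mul_prod_one_sub_inv {n : ℕ} {s : Finset ℕ} (hs : s ⊆ n.primeFactors) :
    (φ n : ℝ) ≤ n * ∏ p ∈ s, (1 - (p : ℝ)⁻¹) := by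
  have euler : (φ n : ℝ) = n * ∏ p ∈ n.primeFactors, (1 - (p : ℝ)⁻¹) := by
    have := congrArg ((↑) : ℚ → ℝ) (totient_eq_mul_prod_factors n)
    push_cast at this
    exact this
  have factor_mem_Icc {p : ℕ} (hp : p ∈ n.primeFactors) : 1 - (p : ℝ)⁻¹ ∈ Set.Icc 0 1 := by
    have : (1 : ℝ) ≤ p := by exact_mod_cast (prime_of_mem_primeFactors hp).one_le
    constructor <;> linarith [inv_le_one_of_one_le₀ this, inv_nonneg.2 (zero_le_one.trans this)]
  rw [euler]
  gcongr ?_ * ?_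
  exact prod_le_prod_of_subset_of_le_one hs (fun p hp ↦ (factor_mem_Icc hp).1)
    fun p hp _ ↦ (factor_mem_Icc hp).2

theorem exists_prod_primesBelow_one_sub_inv_lt {ε : ℝ} (hε : 0 < ε) :
    ∃ z, ∏ p ∈ primesBelow z, (1 - (p : ℝ)⁻¹) < ε := by
  have hdiv := (not_summable_iff_tendsto_nat_atTop_of_nonneg fun n ↦
    Set.indicator_nonneg (fun n _ ↦ by positivity) n).1 not_summable_one_div_on_primes
  obtain ⟨z, hz⟩ := (hdiv.eventually_gt_atTop (-Real.log ε)).exists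
  refine ⟨z, ?_⟩
  simp only [Set.indicator_apply, Set.mem_ofPred_eq] at hz
  rw [← sum_filter, ← primesBelow_eq_filter_range] at hz
  calc ∏ p ∈ primesBelow z, (1 - (p : ℝ)⁻¹)
      ≤ ∏ p ∈ primesBelow z, Real.exp (-(1 / (p : ℝ))) :=
        prod_le_prod (fun p hp ↦ ?_) fun p _ ↦ by simpa using Real.one_sub_le_exp_neg (p : ℝ)⁻¹
    _ = Real.exp (-∑ p ∈ primesBelow z, 1 / (p : ℝ)) := by rw [← Real.exp_sum, sum_neg_distrib]
    _ < ε := by rw [← Real.exp_log hε, Real.exp_lt_exp]; linarith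
  have : (1 : ℝ) ≤ p := by exact_mod_cast (prime_of_mem_primesBelow hp).one_le
  linarith [inv_le_one_of_one_le₀ this]

theorem exists_totient_mul_lt {m : ℕ} (hm : 0 < m) {ε : ℝ} (hε : 0 < ε) :
    ∃ P, (φ (m * P) : ℝ) < ε * P := by
  obtain ⟨z, hz⟩ := exists_prod_primesBelow_one_sub_inv_lt (div_pos hε (Nat.cast_pos.2 hm))
  set P := ∏ p ∈ primesBelow z, p
  have hP : 0 < P := prod_pos fun p hp ↦ (prime_of_mem_primesBelow hp).pos
  have hsub : primesBelow z ⊆ (m * P).primeFactors := fun p hp ↦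
    mem_primeFactors.2 ⟨prime_of_mem_primesBelow hp,
      dvd_mul_of_dvd_right (dvd_prod_of_mem _ hp) m, (Nat.mul_pos hm hP).ne'⟩
  refine ⟨P, (totient_le_mul_prod_one_sub_inv hsub).trans_lt ?_⟩
  calc ((m * P : ℕ) : ℝ) * ∏ p ∈ primesBelow z, (1 - (p : ℝ)⁻¹) < (m * P : ℕ) * (ε / m) := by
        gcongr
    _ = ε * P := by push_cast; field_simp

theorem exists_gt_pow_le_two_pow (N K : ℕ) : ∃ b, N < b ∧ b ^ K ≤ 2 ^ b := by
  set j := N + 2 * K + 1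
  have hj : j < 2 ^ j := Nat.lt_two_pow_self
  have hj2 : 2 ^ j ≤ 2 ^ (2 * j) := Nat.pow_le_pow_right two_pos (by omega)
  refine ⟨2 ^ (2 * j), by omega, ?_⟩
  rw [← pow_mul]
  refine pow_le_pow_right₀ one_le_two ?_
  calc 2 * j * K = j * (2 * K) := by ring
    _ ≤ j * j := Nat.mul_le_mul_left _ (by omega)
    _ ≤ 2 ^ j * 2 ^ j := Nat.mul_le_mul hj.le hj.le
    _ = 2 ^ (2 * j) := by rw [← pow_add, two_mul]

theorem pow_sub_one_dvd_factorial_pow {b K P : ℕ} (hb : 2 ≤ b) (hK : 0 < K)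
    (hbK : b ^ K ≤ 2 ^ b) (hP : 2 * φ K < P) : b ^ K - 1 ∣ (b ^ P)! := by
  refine (Nat.dvd_iff_prime_pow_dvd_dvd _ _).2 fun q v hq hqv ↦ ?_
  rcases Nat.eq_zero_or_pos v with rfl | hv
  · simp
  have hq_le : q ≤ b ^ (2 * φ K) := calc
    q ≤ (b + 1) ^ φ K := hq.le_add_one_pow_totient_of_dvd_pow_sub_one (by omega) hK
      ((dvd_pow_self q hv.ne').trans hqv)
    _ ≤ (b ^ 2) ^ φ K := Nat.pow_le_pow_left (by nlinarith) _
    _ = b ^ (2 * φ K) := by rw [← pow_mul]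
  have hv_lt : v < b := by
    have hpos : 0 < b ^ K - 1 := Nat.sub_pos_of_lt (one_lt_pow hK.ne' (by omega))
    refine (Nat.pow_lt_pow_iff_right (by norm_num : 1 < 2)).1 ?_
    calc 2 ^ v ≤ q ^ v := Nat.pow_le_pow_left hq.two_le v
      _ ≤ b ^ K - 1 := Nat.le_of_dvd hpos hqv
      _ < 2 ^ b := by omega
  refine hq.pow_dvd_factorial_of_mul_le ?_
  calc q * v ≤ b ^ (2 * φ K) * b := Nat.mul_le_mul hq_le hv_lt.le
    _ = b ^ (2 * φ K + 1) := (pow_succ _ _).symm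
    _ ≤ b ^ P := Nat.pow_le_pow_right (by omega) hP

theorem stmt_13 (m : ℕ) (hm : 0 < m) :
    ∀ N : ℕ, ∃ n : ℕ, N < n ∧ ((n : ℤ) ^ m - 1) ∣ (n.factorial : ℤ) := by
  intro N
  obtain ⟨P, hP⟩ := exists_totient_mul_lt hm one_half_pos
  have hφP : 2 * φ (m * P) < P := by exact_mod_cast (by linarith : 2 * (φ (m * P) : ℝ) < P)
  obtain ⟨b, hNb, hb⟩ := exists_gt_pow_le_two_pow (N + 1) (m * P)
  have hdvd := pow_sub_one_dvd_factorial_pow (by omega) (Nat.mul_pos hm (by omega)) hb hφP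
  rw [pow_mul'] at hdvd
  refine ⟨b ^ P, (Nat.lt_of_succ_lt hNb).trans_le (Nat.le_self_pow (by omega) b), ?_⟩
  have h_one_le : 1 ≤ (b ^ P) ^ m := Nat.one_le_pow _ _ (pow_pos (by omega) P)
  simpa [Nat.cast_sub h_one_le] using Int.natCast_dvd_natCast.2 hdvd
end

section
/- Let m be a positive integer and let Φ_m denote the m-th cyclotomic polynomial (over ℤ). Then Φ_m ∈ 𝒫, i.e., there are infinitely many positive integers n such that Φ_m(n) divides n!. -/
/-!
For every `k` we have `Φ_m(2^k) ∣ 2^(mk) - 1 = ∏_{e ∣ mk} Φ_e(2)`. A product of positive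
integers divides the factorial of their sum, and `Φ_e(2) ≤ 3^φ(e)`, so this product divides
`(2^k)!` as soon as `mk · 3^φ(mk) ≤ 2^k`. This holds when `φ(k)/k` is small enough, and since
`∑ 1/p` diverges, `φ(k)/k = ∏_{p ∣ k} (1 - 1/p)` can be made arbitrarily small by taking `k` a
product of many primes larger than `m` and `2`.
-/

open Polynomial Finset
open scoped Nat

theorem Polynomial.cyclotomic_eval_int_le_add_one_pow_totient {q : ℤ} (hq : 1 < q) (n : ℕ) :
    (cyclotomic n ℤ).eval q ≤ (q + 1) ^ φ n := by
  have h := cyclotomic_eval_le_add_one_pow_totient (q := (q : ℝ)) (by exact_mod_cast hq) n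
  have hcast := cyclotomic.eval_apply q n (Int.castRingHom ℝ)
  simp only [Int.coe_castRingHom] at hcast
  rw [hcast] at h
  exact_mod_cast h

theorem Polynomial.sum_divisors_cyclotomic_eval_le {q : ℤ} (hq : 1 < q) (n : ℕ) :
    ∑ e ∈ n.divisors, (cyclotomic e ℤ).eval q ≤ n * (q + 1) ^ φ n := by
  calc ∑ e ∈ n.divisors, (cyclotomic e ℤ).eval q
      ≤ ∑ _e ∈ n.divisors, (q + 1) ^ φ n := sum_le_sum fun e he => by
        obtain ⟨hen, hn⟩ := Nat.mem_divisors.1 he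
        refine (cyclotomic_eval_int_le_add_one_pow_totient hq e).trans ?_
        exact pow_le_pow_right₀ (by omega) <|
          Nat.le_of_dvd (Nat.totient_pos.2 (Nat.pos_of_ne_zero hn)) (Nat.totient_dvd_of_dvd hen)
    _ ≤ n * (q + 1) ^ φ n := by
        rw [sum_const, nsmul_eq_mul]
        gcongr
        exact_mod_cast n.card_divisors_le_self

theorem Int.prod_dvd_factorial_of_sum_le {ι : Type*} {s : Finset ι} {f : ι → ℤ} {M : ℕ}
    (hf : ∀ i ∈ s, 0 < f i) (hM : ∑ i ∈ s, f i ≤ M) : ∏ i ∈ s, f i ∣ (M.factorial : ℤ) := by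
  have hcast : ∀ i ∈ s, ((f i).toNat : ℤ) = f i := fun i hi => Int.toNat_of_nonneg (hf i hi).le
  rw [← prod_congr rfl hcast, ← sum_congr rfl hcast] at *
  rw [← Nat.cast_sum] at hM
  rw [← Nat.cast_prod]
  refine Int.natCast_dvd_natCast.2 ?_
  calc ∏ i ∈ s, (f i).toNat ∣ ∏ i ∈ s, (f i).toNat.factorial :=
        prod_dvd_prod_of_dvd _ _ fun i hi => Nat.dvd_factorial (by have := hf i hi; omega) le_rfl
    _ ∣ (∑ i ∈ s, (f i).toNat).factorial := Nat.prod_factorial_dvd_factorial_sum _ _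
    _ ∣ M.factorial := Nat.factorial_dvd_factorial (by exact_mod_cast hM)

theorem Int.pow_sub_one_dvd_factorial {q : ℤ} (hq : 1 < q) {n M : ℕ} (hn : 0 < n)
    (hM : n * (q + 1) ^ φ n ≤ M) : q ^ n - 1 ∣ (M.factorial : ℤ) := by
  rw [← eval_X (x := q), ← eval_pow, ← eval_one (x := q), ← eval_sub,
    ← prod_cyclotomic_eq_X_pow_sub_one hn, eval_prod]
  exact Int.prod_dvd_factorial_of_sum_le (fun e _ => cyclotomic_pos' e hq)
    ((sum_divisors_cyclotomic_eval_le hq n).trans hM)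

theorem Nat.mul_mul_three_pow_le_two_pow {m k s : ℕ} (hk : k ≤ s ^ 2) (h : 5 * m * s ≤ k) :
    m * k * 3 ^ (m * s) ≤ 2 ^ k := by
  rcases Nat.eq_zero_or_pos m with rfl | hm
  · simp
  rcases Nat.eq_zero_or_pos s with rfl | hs
  · simp_all
  calc m * k * 3 ^ (m * s) ≤ 2 ^ m * (2 ^ s) ^ 2 * 4 ^ (m * s) := by
        gcongr
        · exact m.lt_two_pow_self.le
        · exact hk.trans (Nat.pow_le_pow_left s.lt_two_pow_self.le 2)
        · norm_num
    _ = 2 ^ (m + 2 * s + 2 * (m * s)) := by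
        rw [show (4 : ℕ) = 2 ^ 2 by rfl, ← pow_mul, ← pow_mul, ← pow_add, ← pow_add]; ring_nf
    _ ≤ 2 ^ k := Nat.pow_le_pow_right two_pos (by nlinarith)

theorem Nat.exists_primes_gt_lt_sum_inv (B : ℕ) (T : ℝ) :
    ∃ F : Finset ℕ, (∀ p ∈ F, p.Prime ∧ B < p) ∧ T < ∑ p ∈ F, (p : ℝ)⁻¹ := by
  by_contra! h
  apply not_summable_one_div_on_primes
  rw [← summable_nat_add_iff (B + 1)]
  refine summable_of_sum_le (c := T) (fun n => Set.indicator_nonneg (fun _ _ => by positivity) _)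
    fun u => ?_
  refine le_of_eq_of_le ?_ (h ((u.map (addRightEmbedding (B + 1))).filter Nat.Prime) ?_)
  · rw [sum_filter, sum_map]
    exact sum_congr rfl fun n _ => by simp [Set.indicator_apply]
  · simp only [mem_filter, mem_map, addRightEmbedding_apply]
    rintro p ⟨⟨a, -, rfl⟩, hp⟩
    exact ⟨hp, by omega⟩

theorem Nat.exists_primes_gt_prod_one_sub_inv_lt (B : ℕ) {ε : ℝ} (hε : 0 < ε) :
    ∃ F : Finset ℕ, (∀ p ∈ F, p.Prime ∧ B < p) ∧ ∏ p ∈ F, (1 - (p : ℝ)⁻¹) < ε := by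
  obtain ⟨F, hF, hsum⟩ := exists_primes_gt_lt_sum_inv B (-Real.log ε)
  refine ⟨F, hF, ?_⟩
  calc ∏ p ∈ F, (1 - (p : ℝ)⁻¹) ≤ ∏ p ∈ F, Real.exp (-(p : ℝ)⁻¹) :=
        prod_le_prod (fun p hp => sub_nonneg.2 (inv_le_one_of_one_le₀ (by
          exact_mod_cast (hF p hp).1.one_le))) fun p _ => Real.one_sub_le_exp_neg _
    _ = Real.exp (-∑ p ∈ F, (p : ℝ)⁻¹) := by rw [← Real.exp_sum, sum_neg_distrib]
    _ < Real.exp (Real.log ε) := Real.exp_lt_exp.2 (by linarith)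
    _ = ε := Real.exp_log hε

theorem Nat.totient_prod_primes {F : Finset ℕ} (hF : ∀ p ∈ F, p.Prime) :
    φ (∏ p ∈ F, p) = ∏ p ∈ F, (p - 1) := by
  have h := totient_mul_prod_primeFactors (∏ p ∈ F, p)
  rw [primeFactors_prod hF, mul_comm] at h
  exact Nat.eq_of_mul_eq_mul_left (prod_pos fun p hp => (hF p hp).pos) h

theorem Nat.prod_primes_le_totient_sq {F : Finset ℕ} (hF : ∀ p ∈ F, p.Prime ∧ 2 < p) :
    ∏ p ∈ F, p ≤ φ (∏ p ∈ F, p) ^ 2 := by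
  rw [totient_prod_primes fun p hp => (hF p hp).1, ← prod_pow]
  exact prod_le_prod' fun p hp => by
    have := (hF p hp).2
    nlinarith [Nat.sub_add_cancel (by omega : 1 ≤ p)]

theorem Nat.exists_primes_gt_mul_totient_prod_lt (B C : ℕ) :
    ∃ F : Finset ℕ, (∀ p ∈ F, p.Prime ∧ B < p) ∧ C * φ (∏ p ∈ F, p) < ∏ p ∈ F, p := by
  obtain ⟨F, hF, hprod⟩ :=
    exists_primes_gt_prod_one_sub_inv_lt B (by positivity : (0 : ℝ) < 1 / (C + 1))
  refine ⟨F, hF, ?_⟩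
  have htot := congrArg (Rat.cast : ℚ → ℝ) (totient_eq_mul_prod_factors (∏ p ∈ F, p))
  push_cast at htot
  rw [primeFactors_prod fun p hp => (hF p hp).1] at htot
  have hk : (0 : ℝ) < ∏ p ∈ F, (p : ℝ) := prod_pos fun p hp => by exact_mod_cast (hF p hp).1.pos
  have hnonneg : 0 ≤ ∏ p ∈ F, (1 - (p : ℝ)⁻¹) := prod_nonneg fun p hp =>
    sub_nonneg.2 (inv_le_one_of_one_le₀ (by exact_mod_cast (hF p hp).1.one_le))
  rw [lt_div_iff₀ (by positivity)] at hprod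
  have : (C : ℝ) * φ (∏ p ∈ F, p) < ∏ p ∈ F, p := by
    rw [htot]; push_cast
    nlinarith
  exact_mod_cast this

theorem Nat.exists_coprime_le_totient_sq_mul_totient_lt {m : ℕ} (hm : 0 < m) (C : ℕ) :
    ∃ k, k.Coprime m ∧ k ≤ φ k ^ 2 ∧ C * φ k < k := by
  obtain ⟨F, hF, hlt⟩ := exists_primes_gt_mul_totient_prod_lt (max m 2) C
  refine ⟨∏ p ∈ F, p, ?_, prod_primes_le_totient_sq fun p hp => ⟨(hF p hp).1, ?_⟩, hlt⟩
  · refine Coprime.prod_left fun p hp => ((hF p hp).1.coprime_iff_not_dvd).2 fun h => ?_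
    have := le_of_dvd hm h; have := (hF p hp).2; omega
  · have := (hF p hp).2; omega

theorem stmt_14 (m : ℕ) (hm : 0 < m) :
    ∀ N : ℕ, ∃ n : ℕ, N < n ∧
      (Polynomial.cyclotomic m ℤ).eval (n : ℤ) ∣ (n.factorial : ℤ) := by
  intro N
  obtain ⟨k, hcop, hsq, hlt⟩ := Nat.exists_coprime_le_totient_sq_mul_totient_lt hm (5 * m + N)
  have hk : 0 < φ k := Nat.totient_pos.2 (by omega)
  refine ⟨2 ^ k, ?_, ?_⟩
  · have := k.lt_two_pow_self; nlinarith
  have hbound : m * k * 3 ^ φ (m * k) ≤ 2 ^ k := calc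
    m * k * 3 ^ φ (m * k) = m * k * 3 ^ (φ m * φ k) := by rw [Nat.totient_mul hcop.symm]
    _ ≤ m * k * 3 ^ (m * φ k) := by
      gcongr
      · norm_num
      · exact Nat.totient_le m
    _ ≤ 2 ^ k := Nat.mul_mul_three_pow_le_two_pow hsq (by nlinarith)
  have hdvd := Int.pow_sub_one_dvd_factorial (n := m * k) (M := 2 ^ k) one_lt_two
    (Nat.mul_pos hm (by omega)) (by norm_num; exact_mod_cast hbound)
  push_cast
  calc (cyclotomic m ℤ).eval (2 ^ k) ∣ (2 ^ k) ^ m - 1 := by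
        simpa using eval_dvd (x := (2 : ℤ) ^ k) (cyclotomic.dvd_X_pow_sub_one m ℤ)
    _ = 2 ^ (m * k) - 1 := by ring
    _ ∣ _ := by exact_mod_cast hdvd
end

section
/- Let m be a positive integer, let T_m denote the m-th Chebyshev polynomial of the first kind (with T_0 = 1, T_1 = x, T_{n+1} = 2x·T_n − T_{n−1}), and let ε > 0. Then there are infinitely many positive integers n such that every prime divisor p of T_m(n) satisfies (p : ℝ) < (n : ℝ)^ε. -/
/-!
Take `n = T_j(2)` for a suitable `j`, so that `T_m(n) = T_{mj}(2)` and `n ≥ 2^j`. With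
`a = 2 + √3 ∈ ℤ[√3]` one has `2 T_N(2) = a^N + a^{-N}`, which divides `a^{4N} - 1`. Factoring
`a^{4N} - 1 = ∏_{e ∣ 4N} Φ_e(a)` and taking norms, a prime `p ∣ T_N(2)` divides some nonzero
`N(Φ_e(a)) = Φ_e(2 + √3) Φ_e(2 - √3)`, whose absolute value is at most
`((3 + √3)(3 - √3))^{φ(e)} = 6^{φ(e)}`. Hence `p ≤ 6^{φ(4mj)}`. Choosing `j = K!` with `K` large,
every prime below `K` divides `4mj`, and the divergence of `∑ 1/q` makes `φ(4mj) / j` as small as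
we like, so `6^{φ(4mj)} < 2^{εj} ≤ n^ε`.
-/

open Polynomial Filter Finset

theorem pow_add_pow_dvd_pow_four_mul_sub_one {R : Type*} [CommRing R] {a b : R} (hab : a * b = 1)
    (n : ℕ) : a ^ n + b ^ n ∣ a ^ (4 * n) - 1 := by
  have hn : a ^ n * b ^ n = 1 := by rw [← mul_pow, hab, one_pow]
  refine ⟨a ^ n * (a ^ (2 * n) - 1), ?_⟩
  rw [mul_comm 4 n, pow_mul, mul_comm 2 n, pow_mul]
  linear_combination (1 - (a ^ n) ^ 2) * hn

theorem Real.prod_one_sub_le_exp_neg_sum {ι : Type*} (s : Finset ι) {f : ι → ℝ}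
    (hf : ∀ i ∈ s, f i ≤ 1) : ∏ i ∈ s, (1 - f i) ≤ Real.exp (-∑ i ∈ s, f i) := by
  rw [← sum_neg_distrib, Real.exp_sum]
  exact prod_le_prod (fun i hi ↦ sub_nonneg.mpr (hf i hi)) fun i _ ↦ Real.one_sub_le_exp_neg _

namespace Nat

theorem tendsto_sum_primesBelow_inv :
    Tendsto (fun K : ℕ ↦ ∑ q ∈ K.primesBelow, (q : ℝ)⁻¹) atTop atTop := by
  have h := (not_summable_iff_tendsto_nat_atTop_of_nonneg
    (Set.indicator_nonneg fun q _ ↦ by positivity)).mp not_summable_one_div_on_primes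
  refine h.congr fun K ↦ ?_
  rw [primesBelow, sum_filter]
  exact sum_congr rfl fun q _ ↦ by simp [Set.indicator_apply]

theorem totient_le_mul_prod_of_subset_primeFactors {n : ℕ} {s : Finset ℕ}
    (hs : s ⊆ n.primeFactors) : (φ n : ℝ) ≤ n * ∏ q ∈ s, (1 - (q : ℝ)⁻¹) := by
  have hfac : ∀ q ∈ n.primeFactors, 0 ≤ 1 - (q : ℝ)⁻¹ ∧ 1 - (q : ℝ)⁻¹ ≤ 1 := fun q hq ↦
    ⟨sub_nonneg.mpr (inv_le_one_of_one_le₀ (mod_cast (prime_of_mem_primeFactors hq).one_le)),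
      sub_le_self _ (by positivity)⟩
  have h : (φ n : ℝ) = n * ∏ q ∈ n.primeFactors, (1 - (q : ℝ)⁻¹) := by
    have := congrArg ((↑) : ℚ → ℝ) (totient_eq_mul_prod_factors n)
    push_cast at this
    exact this
  rw [h, ← prod_sdiff hs]
  refine mul_le_mul_of_nonneg_left (mul_le_of_le_one_left ?_ ?_) n.cast_nonneg
  · exact prod_nonneg fun q hq ↦ (hfac q (hs hq)).1
  · exact prod_le_one (fun q hq ↦ (hfac q (mem_sdiff.mp hq).1).1)
      fun q hq ↦ (hfac q (mem_sdiff.mp hq).1).2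

theorem exists_forall_dvd_totient_le_mul {c : ℝ} (hc : 0 < c) (B : ℕ) :
    ∃ j, B ≤ j ∧ ∀ i, j ∣ i → (φ i : ℝ) ≤ c * i := by
  obtain ⟨K, hK, hBK⟩ := ((tendsto_sum_primesBelow_inv.eventually_ge_atTop (Real.log c⁻¹)).and
    (eventually_ge_atTop B)).exists
  refine ⟨K !, hBK.trans (self_le_factorial K), fun i hi ↦ ?_⟩
  rcases eq_or_ne i 0 with rfl | hi0
  · simp
  have hs : K.primesBelow ⊆ i.primeFactors := fun q hq ↦ by
    obtain ⟨hqK, hq⟩ := mem_primesBelow.mp hq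
    exact mem_primeFactors.mpr ⟨hq, (dvd_factorial hq.pos hqK.le).trans hi, hi0⟩
  calc (φ i : ℝ) ≤ i * ∏ q ∈ K.primesBelow, (1 - (q : ℝ)⁻¹) :=
        totient_le_mul_prod_of_subset_primeFactors hs
    _ ≤ i * Real.exp (-Real.log c⁻¹) := by
        refine mul_le_mul_of_nonneg_left ?_ i.cast_nonneg
        refine (Real.prod_one_sub_le_exp_neg_sum _ fun q hq ↦ ?_).trans (by gcongr)
        exact inv_le_one_of_one_le₀ (mod_cast (prime_of_mem_primesBelow hq).one_le)
    _ = c * i := by rw [Real.log_inv, neg_neg, Real.exp_log hc, mul_comm]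

end Nat

namespace Polynomial

theorem norm_eval_cyclotomic_le (d : ℕ) (z : ℂ) :
    ‖(cyclotomic d ℂ).eval z‖ ≤ (‖z‖ + 1) ^ d.totient := by
  rcases eq_or_ne d 0 with rfl | hd
  · simp
  have hζ := Complex.isPrimitiveRoot_exp d hd
  rw [cyclotomic_eq_prod_X_sub_primitiveRoots hζ, eval_prod, norm_prod, ← hζ.card_primitiveRoots,
    ← prod_const]
  refine prod_le_prod (fun _ _ ↦ norm_nonneg _) fun μ hμ ↦ ?_
  have hμ1 : ‖μ‖ = 1 := ((mem_primitiveRoots (Nat.pos_of_ne_zero hd)).mp hμ).norm'_eq_one hd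
  simpa [hμ1] using norm_sub_le z μ

theorem abs_eval_cyclotomic_le (d : ℕ) (x : ℝ) :
    |(cyclotomic d ℝ).eval x| ≤ (|x| + 1) ^ d.totient := by
  have h := norm_eval_cyclotomic_le d x
  rw [← Complex.ofRealHom_eq_coe, cyclotomic.eval_apply x d Complex.ofRealHom] at h
  simpa using h

theorem eval_cyclotomic_ne_zero {d : ℕ} (hd : d ≠ 0) {x : ℝ} (hx : |x| ≠ 1) :
    (cyclotomic d ℝ).eval x ≠ 0 := by
  intro h
  have : NeZero (d : ℝ) := ⟨Nat.cast_ne_zero.mpr hd⟩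
  have hpow : |x| ^ d = 1 := by rw [← abs_pow, ((isRoot_cyclotomic_iff).mp h).pow_eq_one, abs_one]
  exact hx ((pow_eq_one_iff_of_nonneg (abs_nonneg x) hd).mp hpow)

namespace Chebyshev

theorem two_mul_T_eval_eq_pow_add_pow {R : Type*} [CommRing R] {a b x : R} (hab : a * b = 1)
    (hx : a + b = 2 * x) (k : ℕ) : 2 * (T R k).eval x = a ^ k + b ^ k := by
  have h := congrArg (eval x) (C_comp_two_mul_X R k)
  rw [eval_comp, eval_mul, eval_X, eval_ofNat, ← hx, ← dickson_one_one_eq_chebyshev_C,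
    dickson_one_one_eval_add_inv a b hab] at h
  simpa [eval_mul] using h.symm

theorem pow_le_T_eval {R : Type*} [CommRing R] [LinearOrder R] [IsStrictOrderedRing R] {x : R}
    (hx : 1 ≤ x) (k : ℕ) : x ^ k ≤ (T R k).eval x := by
  suffices ∀ k : ℕ, x ^ k ≤ (T R k).eval x ∧ x * (T R k).eval x ≤ (T R (k + 1)).eval x from
    (this k).1
  intro k
  induction k with
  | zero => simp
  | succ k ih =>
    obtain ⟨hpow, hstep⟩ := ih
    have hx0 : 0 ≤ x := zero_le_one.trans hx
    have hT : 0 ≤ (T R k).eval x := (pow_nonneg hx0 k).trans hpow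
    refine ⟨?_, ?_⟩
    · calc x ^ (k + 1) = x * x ^ k := pow_succ' x k
        _ ≤ x * (T R k).eval x := mul_le_mul_of_nonneg_left hpow hx0
        _ ≤ _ := mod_cast hstep
    · have hrec : (T R ((k + 1 : ℕ) + 1)).eval x =
          2 * x * (T R (k + 1)).eval x - (T R k).eval x := by
        rw [Nat.cast_add_one, add_assoc, one_add_one_eq_two, T_add_two]
        simp only [eval_sub, eval_mul, eval_X, eval_ofNat]
      have hTk : (T R k).eval x ≤ x * (x * (T R k).eval x) := by
        nlinarith [mul_nonneg (show 0 ≤ x * x - 1 by nlinarith) hT]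
      rw [hrec, Nat.cast_add_one]
      nlinarith [mul_le_mul_of_nonneg_left hstep hx0]

end Chebyshev

end Polynomial

namespace Zsqrtd

variable {d : ℤ}

theorem intCast_norm_eq_mul_star {R : Type*} [CommRing R] (φ : ℤ√d →+* R) (z : ℤ√d) :
    (z.norm : R) = φ z * φ (star z) := by
  rw [← map_mul, ← norm_eq_mul_conj, map_intCast]

theorem exists_dvd_norm_eval_cyclotomic {p : ℕ} (hp : p.Prime) {M : ℕ} (hM : 0 < M) {z : ℤ√d}
    (h : (p : ℤ√d) ∣ z ^ M - 1) :
    ∃ e ∈ M.divisors, (p : ℤ) ∣ ((cyclotomic e (ℤ√d)).eval z).norm := by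
  have hprod : z ^ M - 1 = ∏ e ∈ M.divisors, (cyclotomic e (ℤ√d)).eval z := by
    rw [← eval_prod, prod_cyclotomic_eq_X_pow_sub_one hM]
    simp
  obtain ⟨c, hc⟩ := h
  have hsq : (p : ℤ) * p ∣ ∏ e ∈ M.divisors, ((cyclotomic e (ℤ√d)).eval z).norm := by
    refine ⟨c.norm, ?_⟩
    have hnorm : ∏ e ∈ M.divisors, ((cyclotomic e (ℤ√d)).eval z).norm =
        (∏ e ∈ M.divisors, (cyclotomic e (ℤ√d)).eval z).norm :=
      (map_prod normMonoidHom _ _).symm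
    rw [hnorm, ← hprod, hc, norm_mul, ← Int.cast_natCast, norm_intCast]
  exact (Nat.prime_iff_prime_int.mp hp).exists_mem_finset_dvd (dvd_of_mul_left_dvd hsq)

theorem prime_le_of_dvd_pow_sub_one (φ : ℤ√d →+* ℝ) {z : ℤ√d} (hz : |φ z| ≠ 1)
    (hz' : |φ (star z)| ≠ 1) {p : ℕ} (hp : p.Prime) {M : ℕ} (hM : 0 < M)
    (h : (p : ℤ√d) ∣ z ^ M - 1) :
    (p : ℝ) ≤ ((|φ z| + 1) * (|φ (star z)| + 1)) ^ M.totient := by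
  obtain ⟨e, he, hpe⟩ := exists_dvd_norm_eval_cyclotomic hp hM h
  have he0 : e ≠ 0 := Nat.ne_of_gt (Nat.pos_of_mem_divisors he)
  have hnorm : (((cyclotomic e (ℤ√d)).eval z).norm : ℝ) =
      (cyclotomic e ℝ).eval (φ z) * (cyclotomic e ℝ).eval (φ (star z)) := by
    have hstar : star ((cyclotomic e (ℤ√d)).eval z) = (cyclotomic e (ℤ√d)).eval (star z) :=
      (cyclotomic.eval_apply z e (starRingEnd (ℤ√d))).symm
    rw [intCast_norm_eq_mul_star φ, hstar, cyclotomic.eval_apply, cyclotomic.eval_apply]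
  have hne : ((cyclotomic e (ℤ√d)).eval z).norm ≠ 0 := by
    have := mul_ne_zero (eval_cyclotomic_ne_zero he0 hz) (eval_cyclotomic_ne_zero he0 hz')
    exact_mod_cast hnorm ▸ this
  have htot : e.totient ≤ M.totient :=
    Nat.le_of_dvd (Nat.totient_pos.mpr hM) (Nat.totient_dvd_of_dvd (Nat.dvd_of_mem_divisors he))
  calc (p : ℝ) ≤ |(((cyclotomic e (ℤ√d)).eval z).norm : ℝ)| := by
        exact_mod_cast Int.le_of_dvd (abs_pos.mpr hne) ((dvd_abs _ _).mpr hpe)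
    _ ≤ (|φ z| + 1) ^ e.totient * (|φ (star z)| + 1) ^ e.totient := by
        rw [hnorm, abs_mul]
        exact mul_le_mul (abs_eval_cyclotomic_le e _) (abs_eval_cyclotomic_le e _)
          (abs_nonneg _) (by positivity)
    _ ≤ ((|φ z| + 1) * (|φ (star z)| + 1)) ^ M.totient := by
        rw [← mul_pow]
        exact pow_le_pow_right₀ (one_le_mul_of_one_le_of_one_le (by simp) (by simp)) htot

end Zsqrtd

theorem Polynomial.Chebyshev.prime_le_six_pow_totient_of_dvd_T_eval_two {N : ℕ} (hN : 0 < N)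
    {p : ℕ} (hp : p.Prime) (h : (p : ℤ) ∣ (T ℤ N).eval 2) : (p : ℝ) ≤ 6 ^ (4 * N).totient := by
  set a : ℤ√3 := ⟨2, 1⟩
  have hab : a * star a = 1 := by ext <;> simp [a]
  have hsum : a + star a = 2 * 2 := by ext <;> simp [a]
  have hT : (((2 * (T ℤ N).eval 2 : ℤ)) : ℤ√3) = a ^ N + star a ^ N := by
    rw [← two_mul_T_eval_eq_pow_add_pow hab hsum, ← map_T (Int.castRingHom (ℤ√3)), eval_map,
      ← map_ofNat (Int.castRingHom (ℤ√3)) 2, eval₂_hom]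
    push_cast; rfl
  have hdvd : (p : ℤ√3) ∣ a ^ (4 * N) - 1 := by
    rw [← Int.cast_natCast]
    exact (Int.cast_dvd_cast _ _ (h.mul_left 2)).trans
      (hT ▸ pow_add_pow_dvd_pow_four_mul_sub_one hab N)
  have h3 : √3 * √3 = ((3 : ℤ) : ℝ) := by norm_num
  set φ : ℤ√3 →+* ℝ := Zsqrtd.lift ⟨√3, h3⟩
  have h1 : 1 < √3 := by rw [Real.lt_sqrt zero_le_one]; norm_num
  have h2 : √3 < 2 := by rw [Real.sqrt_lt' two_pos]; norm_num
  have hφa : |φ a| = 2 + √3 := by simp [φ, a]; positivity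
  have hφa' : |φ (star a)| = 2 - √3 := by
    simp [φ, a, ← sub_eq_add_neg, abs_of_pos (sub_pos.mpr h2)]
  have h6 : (|φ a| + 1) * (|φ (star a)| + 1) = 6 := by
    rw [hφa, hφa']
    nlinarith [Real.mul_self_sqrt (zero_le_three : (0 : ℝ) ≤ 3)]
  rw [← h6]
  exact Zsqrtd.prime_le_of_dvd_pow_sub_one φ (by rw [hφa]; linarith) (by rw [hφa']; linarith) hp
    (by omega) hdvd

open Polynomial.Chebyshev in
theorem stmt_17 (m : ℕ) (hm : 0 < m) (ε : ℝ) (hε : 0 < ε) :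
    ∀ N : ℕ, ∃ n : ℕ, N < n ∧
      ∀ p : ℕ, p.Prime → (p : ℤ) ∣ (Polynomial.Chebyshev.T ℤ (m : ℤ)).eval (n : ℤ) →
        (p : ℝ) < (n : ℝ) ^ ε := by
  intro N
  obtain ⟨j, hNj, hj⟩ :=
    Nat.exists_forall_dvd_totient_le_mul (c := ε / (12 * m)) (by positivity) (N + 1)
  have h2j : (2 : ℤ) ^ j ≤ (T ℤ j).eval 2 := pow_le_T_eval one_le_two j
  obtain ⟨n, hn⟩ := Int.eq_ofNat_of_zero_le (h2j.trans' (by positivity))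
  have h2n : 2 ^ j ≤ n := by exact_mod_cast hn ▸ h2j
  refine ⟨n, (Nat.lt_of_succ_le hNj |>.trans j.lt_two_pow_self).trans_le h2n, fun p hp hdvd ↦ ?_⟩
  rw [← hn, ← eval_comp, ← T_mul, ← Nat.cast_mul] at hdvd
  have hj0 : 0 < j := by omega
  set k := (4 * (m * j)).totient
  have hk : 0 < k := Nat.totient_pos.mpr (by positivity)
  have hkj : 3 * (k : ℝ) ≤ ε * j := by
    have htot := hj (4 * (m * j)) (Dvd.intro_left _ rfl |>.mul_left 4)
    calc 3 * (k : ℝ) ≤ 3 * (ε / (12 * m) * ↑(4 * (m * j))) := by gcongr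
      _ = ε * j := by push_cast; field_simp; ring
  calc (p : ℝ) ≤ 6 ^ k := prime_le_six_pow_totient_of_dvd_T_eval_two (by positivity) hp hdvd
    _ < 8 ^ k := pow_lt_pow_left₀ (by norm_num) (by norm_num) hk.ne'
    _ = 2 ^ (3 * (k : ℝ)) := by rw [Real.rpow_mul zero_le_two]; norm_num
    _ ≤ 2 ^ (ε * j) := Real.rpow_le_rpow_of_exponent_le one_le_two hkj
    _ = ((2 : ℝ) ^ j) ^ ε := by rw [mul_comm, Real.rpow_mul zero_le_two, Real.rpow_natCast]
    _ ≤ (n : ℝ) ^ ε := Real.rpow_le_rpow (by positivity) (by exact_mod_cast h2n) hε.le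
end

section
/- Let k be a positive integer and let m_1, m_2, …, m_k be positive integers. Let T_{m_i} denote the m_i-th Chebyshev polynomial of the first kind (with T_0 = 1, T_1 = x, T_{n+1} = 2x·T_n − T_{n−1}). Then the product T(x) = T_{m_1}(x)·T_{m_2}(x)···T_{m_k}(x) belongs to 𝒫, i.e., there are infinitely many positive integers n such that T_{m_1}(n)·T_{m_2}(n)···T_{m_k}(n) divides n!. -/
/-!
Take `n = T_j(2)`; since `T_m ∘ T_j = T_{mj}`, each factor is `T_{m_i j}(2)`. With `α = 2 + √3`,
`2 T_N(2) α^N = α^{2N} + 1 = ∏ Φ_d(α)` over the divisors `d` of `4N` not dividing `2N`, so taking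
norms in `ℤ[√3]` writes `4 T_N(2)^2` as a product of integers `|N(Φ_d(α))| ≤ 6^{φ(d)}`. If `j` is
a power of a product of sufficiently many primes (possible since `∑ 1/p` diverges), then
`3 φ(d) ≤ j` for all these `d`, so every factor is at most `2^j`. There are `O(j)` factors and
`n ≥ 3^j / 2`, so their sum is at most `n`, and a product of positive integers divides the
factorial of its sum.
-/

open Polynomial Finset Filter
open scoped Nat

namespace ChebyshevFactorial

theorem exists_primes_prod_one_sub_inv_lt {ε : ℝ} (hε : 0 < ε) :
    ∃ F : Finset ℕ, (∀ p ∈ F, p.Prime) ∧ ∏ p ∈ F, (1 - (p : ℝ)⁻¹) < ε := by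
  obtain ⟨u, hu⟩ : ∃ u : Finset ℕ, -Real.log ε < ∑ n ∈ u, {p : ℕ | p.Prime}.indicator
      (fun n : ℕ ↦ (1 : ℝ) / n) n := by
    by_contra! h
    exact not_summable_one_div_on_primes
      (summable_of_sum_le (fun n ↦ Set.indicator_nonneg (fun _ _ ↦ by positivity) n) h)
  rw [sum_indicator_eq_sum_filter] at hu
  simp only [Set.mem_ofPred_eq] at hu
  refine ⟨u.filter Nat.Prime, fun p hp ↦ (mem_filter.1 hp).2, ?_⟩
  calc ∏ p ∈ u.filter Nat.Prime, (1 - (p : ℝ)⁻¹)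
      ≤ ∏ p ∈ u.filter Nat.Prime, Real.exp (-(p : ℝ)⁻¹) := by
        refine prod_le_prod (fun p hp ↦ ?_)
          (fun p _ ↦ by linarith [Real.add_one_le_exp (-(p : ℝ)⁻¹)])
        have : (1 : ℝ) ≤ p := mod_cast (mem_filter.1 hp).2.one_le
        linarith [inv_le_one_of_one_le₀ this]
    _ = Real.exp (-∑ p ∈ u.filter Nat.Prime, (1 : ℝ) / p) := by
        simp [← Real.exp_sum, sum_neg_distrib]
    _ < Real.exp (Real.log ε) := Real.exp_lt_exp.2 (by linarith)
    _ = ε := Real.exp_log hε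

theorem exists_forall_dvd_totient_le (L K : ℕ) (hL : L ≠ 0) :
    ∃ Q, 1 < Q ∧ ∀ e ≠ 0, ∀ d, d ∣ L * Q ^ e → K * φ d ≤ Q ^ e := by
  obtain ⟨F, hFp, hF⟩ := exists_primes_prod_one_sub_inv_lt (ε := ((K * L + 1 : ℕ) : ℝ)⁻¹)
    (by positivity)
  have hF0 : ∏ p ∈ F, p ≠ 0 := prod_ne_zero_iff.2 fun p hp ↦ (hFp p hp).ne_zero
  set Q := 2 * L * ∏ p ∈ F, p
  have hQ : 1 < Q := by
    have := Nat.pos_of_ne_zero hF0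
    have := Nat.pos_of_ne_zero hL
    simp only [Q]
    nlinarith
  refine ⟨Q, hQ, fun e he d hd ↦ ?_⟩
  set n := L * Q ^ e
  have hn : n ≠ 0 := by positivity
  have hsub : F ⊆ n.primeFactors := fun p hp ↦ Nat.mem_primeFactors.2
    ⟨hFp p hp, (dvd_prod_of_mem (fun p : ℕ ↦ p) hp).trans ((dvd_mul_left _ _).trans
      ((dvd_pow_self _ he).trans (dvd_mul_left _ _))), hn⟩
  have htot : (φ n : ℝ) ≤ n * ((K * L + 1 : ℕ) : ℝ)⁻¹ := by
    have h := congrArg (Rat.cast : ℚ → ℝ) (Nat.totient_eq_mul_prod_factors n)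
    push_cast at h
    rw [h]
    refine mul_le_mul_of_nonneg_left
      ((prod_le_prod_of_subset_of_le_one hsub ?_ ?_).trans hF.le) (Nat.cast_nonneg _)
    · intro p hp
      have : (1 : ℝ) ≤ p := mod_cast (Nat.prime_of_mem_primeFactors hp).one_le
      linarith [inv_le_one_of_one_le₀ this]
    · intro p _ _
      linarith [(inv_nonneg.2 (Nat.cast_nonneg p) : (0 : ℝ) ≤ (p : ℝ)⁻¹)]
  have hdn : φ d ≤ φ n :=
    Nat.le_of_dvd (Nat.totient_pos.2 (Nat.pos_of_ne_zero hn)) (Nat.totient_dvd_of_dvd hd)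
  have hKn : (K * φ n : ℝ) ≤ Q ^ e := by
    have hKL : (0 : ℝ) < K * L + 1 := by positivity
    calc (K * φ n : ℝ) ≤ K * (n * ((K * L + 1 : ℕ) : ℝ)⁻¹) := by gcongr
      _ = (K * L) / (K * L + 1) * Q ^ e := by push_cast [n]; field_simp
      _ ≤ 1 * Q ^ e := by gcongr; rw [div_le_one hKL]; linarith
      _ = Q ^ e := one_mul _
  calc K * φ d ≤ K * φ n := Nat.mul_le_mul_left K hdn
    _ ≤ Q ^ e := by exact_mod_cast hKn

theorem eventually_mul_two_pow_le_three_pow (c : ℕ) :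
    ∀ᶠ j in atTop, c * j * 2 ^ j ≤ 3 ^ j := by
  have h := (tendsto_pow_const_div_const_pow_of_one_lt 1
    (by norm_num : (1 : ℝ) < 3 / 2)).eventually
    (gt_mem_nhds (by positivity : (0 : ℝ) < (c + 1 : ℝ)⁻¹))
  filter_upwards [h] with j hj
  rw [pow_one, div_pow, div_div_eq_mul_div, div_lt_iff₀ (by positivity), ← div_eq_inv_mul,
    lt_div_iff₀ (by positivity)] at hj
  have : (c + 1) * j * 2 ^ j < 3 ^ j := by
    exact_mod_cast (by linarith : ((c : ℝ) + 1) * j * 2 ^ j < 3 ^ j)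
  calc c * j * 2 ^ j ≤ (c + 1) * j * 2 ^ j := by gcongr; omega
    _ ≤ 3 ^ j := this.le

theorem prod_dvd_factorial_sum {ι : Type*} {s : Finset ι} {f : ι → ℕ} (hf : ∀ i ∈ s, f i ≠ 0) :
    ∏ i ∈ s, f i ∣ (∑ i ∈ s, f i)! :=
  (prod_dvd_prod_of_dvd _ _ fun i hi ↦
    Nat.dvd_factorial (Nat.pos_of_ne_zero (hf i hi)) le_rfl).trans
    (Nat.prod_factorial_dvd_factorial_sum s f)

theorem prod_cyclotomic_sdiff_divisors (R : Type*) [CommRing R] {n : ℕ} (hn : n ≠ 0) :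
    ∏ d ∈ (2 * n).divisors \ n.divisors, cyclotomic d R = X ^ n + 1 := by
  have h := X_pow_sub_one_mul_prod_cyclotomic_eq_X_pow_sub_one_of_dvd R (dvd_mul_left n 2)
    (by positivity)
  rw [show (X ^ (2 * n) - 1 : R[X]) = (X ^ n - 1) * (X ^ n + 1) by ring] at h
  exact (monic_X_pow_sub_C (1 : R) hn).isRegular.left h

theorem abs_eval_cyclotomic_le (d : ℕ) (x : ℝ) :
    |(cyclotomic d ℝ).eval x| ≤ (|x| + 1) ^ φ d := by
  rcases Nat.eq_zero_or_pos d with rfl | hd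
  · simp
  have hζ := Complex.isPrimitiveRoot_exp d hd.ne'
  rw [← Real.norm_eq_abs, ← Complex.norm_real, ← cyclotomic.eval_apply_ofReal, ← Real.norm_eq_abs,
    ← Complex.norm_real, cyclotomic_eq_prod_X_sub_primitiveRoots hζ, eval_prod, norm_prod,
    ← Complex.card_primitiveRoots d, ← prod_const]
  refine prod_le_prod (fun _ _ ↦ norm_nonneg _) fun μ hμ ↦ ?_
  have hμ : ‖μ‖ = 1 :=
    Complex.norm_eq_one_of_pow_eq_one ((mem_primitiveRoots hd).1 hμ).pow_eq_one hd.ne'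
  simpa [hμ] using norm_sub_le (x : ℂ) μ

theorem two_mul_eval_T_eq_pow_add_pow {R : Type*} [CommRing R] {x y a : R} (hxy : x * y = 1)
    (ha : x + y = 2 * a) (n : ℕ) : 2 * (Chebyshev.T R n).eval a = x ^ n + y ^ n := by
  have h := congrArg (eval a) (Chebyshev.C_comp_two_mul_X R n)
  rw [eval_comp, eval_mul, eval_X, eval_ofNat] at h
  rw [← dickson_one_one_eval_add_inv x y hxy n, dickson_one_one_eq_chebyshev_C, ha, h, eval_mul,
    eval_ofNat]

noncomputable section

def fundUnit : ℤ√3 := ⟨2, 1⟩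

def chebyshevTEvalTwo (N : ℕ) : ℤ := (Chebyshev.T ℤ N).eval 2

def cyclotomicNorm (d : ℕ) : ℕ := ((cyclotomic d (ℤ√3)).eval fundUnit).norm.natAbs

def toReal : ℤ√3 →+* ℝ := Zsqrtd.lift ⟨√3, by norm_num⟩

theorem fundUnit_mul_star : fundUnit * star fundUnit = 1 := by
  ext <;> simp [fundUnit, Zsqrtd.star_mk]

theorem fundUnit_pow_add_star_pow (N : ℕ) :
    fundUnit ^ N + star fundUnit ^ N = 2 * (chebyshevTEvalTwo N : ℤ√3) := by
  rw [chebyshevTEvalTwo, ← eq_intCast (algebraMap ℤ (ℤ√3)), Chebyshev.algebraMap_eval_T, map_ofNat]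
  refine (two_mul_eval_T_eq_pow_add_pow fundUnit_mul_star ?_ N).symm
  ext <;> simp [fundUnit, Zsqrtd.star_mk]

theorem two_mul_chebyshevTEvalTwo_mul_fundUnit_pow (N : ℕ) :
    2 * (chebyshevTEvalTwo N : ℤ√3) * fundUnit ^ N = fundUnit ^ (2 * N) + 1 := by
  rw [← fundUnit_pow_add_star_pow, add_mul, ← mul_pow (star fundUnit), mul_comm (star fundUnit),
    fundUnit_mul_star, one_pow, ← pow_add, two_mul]

theorem prod_cyclotomicNorm {N : ℕ} (hN : N ≠ 0) :
    ∏ d ∈ (2 * (2 * N)).divisors \ (2 * N).divisors, cyclotomicNorm d =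
      4 * (chebyshevTEvalTwo N).natAbs ^ 2 := by
  have hprod : ∏ d ∈ (2 * (2 * N)).divisors \ (2 * N).divisors,
      (cyclotomic d (ℤ√3)).eval fundUnit = 2 * (chebyshevTEvalTwo N : ℤ√3) * fundUnit ^ N := by
    rw [← eval_prod, prod_cyclotomic_sdiff_divisors _ (by omega),
      two_mul_chebyshevTEvalTwo_mul_fundUnit_pow]
    simp
  have hnorm : (fundUnit ^ N).norm = 1 := by
    rw [show (fundUnit ^ N).norm = fundUnit.norm ^ N from map_pow Zsqrtd.normMonoidHom _ _]
    simp [fundUnit, Zsqrtd.norm_def]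
  calc ∏ d ∈ (2 * (2 * N)).divisors \ (2 * N).divisors, cyclotomicNorm d
      = (∏ d ∈ (2 * (2 * N)).divisors \ (2 * N).divisors,
          (cyclotomic d (ℤ√3)).eval fundUnit).norm.natAbs :=
        (map_prod Int.natAbsHom _ _).symm.trans
          (congrArg Int.natAbs (map_prod Zsqrtd.normMonoidHom _ _).symm)
    _ = 4 * (chebyshevTEvalTwo N).natAbs ^ 2 := by
        rw [hprod, Zsqrtd.norm_mul, Zsqrtd.norm_mul, hnorm, Zsqrtd.norm_intCast,
          show Zsqrtd.norm (2 : ℤ√3) = 4 by rfl, mul_one, Int.natAbs_mul, Int.natAbs_mul, sq]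
        rfl

theorem toReal_fundUnit : toReal fundUnit = 2 + √3 := by
  simp [toReal, fundUnit]

theorem toReal_star_fundUnit : toReal (star fundUnit) = 2 - √3 := by
  simp [toReal, fundUnit, Zsqrtd.star_mk, sub_eq_add_neg]

theorem cyclotomicNorm_le (d : ℕ) : cyclotomicNorm d ≤ 6 ^ φ d := by
  have hstar : star ((cyclotomic d (ℤ√3)).eval fundUnit) =
      (cyclotomic d (ℤ√3)).eval (star fundUnit) :=
    (cyclotomic.eval_apply fundUnit d (starRingEnd _)).symm
  have hnorm : (cyclotomicNorm d : ℝ) =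
      |(cyclotomic d ℝ).eval (2 + √3)| * |(cyclotomic d ℝ).eval (2 - √3)| := by
    rw [cyclotomicNorm, Nat.cast_natAbs, ← abs_mul, ← toReal_fundUnit, ← toReal_star_fundUnit,
      cyclotomic.eval_apply, cyclotomic.eval_apply, ← hstar, ← map_mul,
      ← Zsqrtd.norm_eq_mul_conj, map_intCast, Int.cast_abs]
  have hs : √3 ≤ 2 := by rw [Real.sqrt_le_left (by norm_num)]; norm_num
  have h6 : (|2 + √3| + 1) * (|2 - √3| + 1) = 6 := by
    rw [abs_of_nonneg (by positivity), abs_of_nonneg (by linarith)]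
    nlinarith [Real.sq_sqrt (show (0 : ℝ) ≤ 3 by norm_num)]
  have : (cyclotomicNorm d : ℝ) ≤ 6 ^ φ d := by
    rw [hnorm, ← h6, mul_pow]
    exact mul_le_mul (abs_eval_cyclotomic_le d _) (abs_eval_cyclotomic_le d _) (abs_nonneg _)
      (by positivity)
  exact_mod_cast this

theorem three_pow_le_two_mul_chebyshevTEvalTwo (N : ℕ) : 3 ^ N ≤ 2 * chebyshevTEvalTwo N := by
  have h := congrArg toReal (fundUnit_pow_add_star_pow N)
  rw [map_add, map_pow, map_pow, toReal_fundUnit, toReal_star_fundUnit, map_mul, map_ofNat,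
    map_intCast] at h
  have hs : 1 ≤ √3 := Real.one_le_sqrt.2 (by norm_num)
  have hs2 : √3 ≤ 2 := by rw [Real.sqrt_le_left (by norm_num)]; norm_num
  have : (3 : ℝ) ^ N ≤ 2 * chebyshevTEvalTwo N := by
    rw [← h]
    have := pow_le_pow_left₀ (by norm_num) (by linarith : (3 : ℝ) ≤ 2 + √3) N
    have := pow_nonneg (by linarith : (0 : ℝ) ≤ 2 - √3) N
    linarith
  exact_mod_cast this

theorem lt_chebyshevTEvalTwo (N : ℕ) : (N : ℤ) < chebyshevTEvalTwo N := by
  have h3 := three_pow_le_two_mul_chebyshevTEvalTwo N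
  have hB := one_add_mul_le_pow (by norm_num : (-2 : ℤ) ≤ 2) N
  norm_num at hB
  linarith

theorem eval_T_chebyshevTEvalTwo (m j : ℕ) :
    (Chebyshev.T ℤ m).eval (chebyshevTEvalTwo j) = chebyshevTEvalTwo (m * j) := by
  rw [chebyshevTEvalTwo, chebyshevTEvalTwo, Nat.cast_mul, Chebyshev.T_mul, eval_comp]

theorem sum_cyclotomicNorm_le {N j : ℕ} (hsmooth : ∀ d, d ∣ 4 * N → 3 * φ d ≤ j) :
    ∑ d ∈ (2 * (2 * N)).divisors \ (2 * N).divisors, cyclotomicNorm d ≤ 4 * N * 2 ^ j := by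
  have hle : ∀ d ∈ (2 * (2 * N)).divisors \ (2 * N).divisors, cyclotomicNorm d ≤ 2 ^ j := by
    intro d hd
    have hd : d ∣ 4 * N := by
      rw [show 4 * N = 2 * (2 * N) by ring]
      exact Nat.dvd_of_mem_divisors (mem_sdiff.1 hd).1
    calc cyclotomicNorm d ≤ 6 ^ φ d := cyclotomicNorm_le d
      _ ≤ (2 ^ 3) ^ φ d := by gcongr; norm_num
      _ ≤ 2 ^ j := by rw [← pow_mul]; exact Nat.pow_le_pow_right (by norm_num) (hsmooth d hd)
  calc ∑ d ∈ (2 * (2 * N)).divisors \ (2 * N).divisors, cyclotomicNorm d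
      ≤ #((2 * (2 * N)).divisors \ (2 * N).divisors) * 2 ^ j := sum_le_card_nsmul _ _ _ hle
    _ ≤ 4 * N * 2 ^ j := by
      gcongr
      calc _ ≤ #(2 * (2 * N)).divisors := card_le_card sdiff_subset
        _ ≤ 2 * (2 * N) := Nat.card_divisors_le_self _
        _ = 4 * N := by ring

theorem prod_eval_T_dvd_factorial {ι : Type*} [Fintype ι] (m : ι → ℕ) (hm : ∀ i, m i ≠ 0)
    {j : ℕ} (hj : j ≠ 0) (hsmooth : ∀ i d, d ∣ 4 * m i * j → 3 * φ d ≤ j)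
    (hgrowth : 8 * (∑ i, m i) * j * 2 ^ j ≤ 3 ^ j) :
    ∏ i, (Chebyshev.T ℤ (m i)).eval (chebyshevTEvalTwo j) ∣ ((chebyshevTEvalTwo j).toNat)! := by
  set S : ι → Finset ℕ := fun i ↦ (2 * (2 * (m i * j))).divisors \ (2 * (m i * j)).divisors
  have hprod : ∀ i, ∏ d ∈ S i, cyclotomicNorm d = 4 * (chebyshevTEvalTwo (m i * j)).natAbs ^ 2 :=
    fun i ↦ prod_cyclotomicNorm (mul_ne_zero (hm i) hj)
  have hne : ∀ i, ∀ d ∈ S i, cyclotomicNorm d ≠ 0 := by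
    intro i d hd h
    have ht : (chebyshevTEvalTwo (m i * j)).natAbs ≠ 0 :=
      Int.natAbs_ne_zero.2 ((Int.natCast_nonneg _).trans_lt (lt_chebyshevTEvalTwo _)).ne'
    have h0 := hprod i
    rw [prod_eq_zero hd h] at h0
    exact mul_ne_zero four_ne_zero (pow_ne_zero 2 ht) h0.symm
  have hsum : ∑ i, ∑ d ∈ S i, cyclotomicNorm d ≤ (chebyshevTEvalTwo j).toNat := by
    have h3 := three_pow_le_two_mul_chebyshevTEvalTwo j
    have : ∑ i, ∑ d ∈ S i, cyclotomicNorm d ≤ 4 * (∑ i, m i) * j * 2 ^ j := by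
      rw [mul_sum, sum_mul, sum_mul]
      refine sum_le_sum fun i _ ↦
        (sum_cyclotomicNorm_le fun d hd ↦ hsmooth i d ?_).trans_eq (by ring)
      rwa [mul_assoc]
    rw [Int.le_toNat ((Int.natCast_nonneg j).trans (lt_chebyshevTEvalTwo j).le)]
    zify at this hgrowth
    push_cast
    linarith
  simp_rw [eval_T_chebyshevTEvalTwo, Int.dvd_natCast]
  calc (∏ i, chebyshevTEvalTwo (m i * j)).natAbs = ∏ i, (chebyshevTEvalTwo (m i * j)).natAbs :=
        map_prod Int.natAbsHom _ _
    _ ∣ ∏ i, ∏ d ∈ S i, cyclotomicNorm d := prod_dvd_prod_of_dvd _ _ fun i _ ↦ by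
        rw [hprod i]; exact Dvd.intro_left (4 * _) (by ring)
    _ ∣ ∏ i, (∑ d ∈ S i, cyclotomicNorm d)! :=
        prod_dvd_prod_of_dvd _ _ fun i _ ↦ prod_dvd_factorial_sum (hne i)
    _ ∣ (∑ i, ∑ d ∈ S i, cyclotomicNorm d)! := Nat.prod_factorial_dvd_factorial_sum _ _
    _ ∣ _ := Nat.factorial_dvd_factorial hsum

end

end ChebyshevFactorial

open ChebyshevFactorial

theorem stmt_18_general (k : ℕ) (m : Fin k → ℕ) (hm : ∀ i, 0 < m i) :
    ∀ N : ℕ, ∃ n : ℕ, N < n ∧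
      (∏ i, (Polynomial.Chebyshev.T ℤ (m i : ℤ)).eval (n : ℤ)) ∣ (n.factorial : ℤ) := by
  intro N
  obtain ⟨Q, hQ, hsmooth⟩ := exists_forall_dvd_totient_le (4 * ∏ i, m i) 3
    (mul_ne_zero four_ne_zero (prod_ne_zero_iff.2 fun i _ ↦ (hm i).ne'))
  obtain ⟨e, hNe, hgrowth⟩ := ((eventually_gt_atTop N).and
    ((tendsto_pow_atTop_atTop_of_one_lt hQ).eventually
      (eventually_mul_two_pow_le_three_pow (8 * ∑ i, m i)))).exists
  have hej : e < Q ^ e := Nat.lt_pow_self hQ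
  have hjn := lt_chebyshevTEvalTwo (Q ^ e)
  refine ⟨(chebyshevTEvalTwo (Q ^ e)).toNat, by omega, ?_⟩
  rw [Int.toNat_of_nonneg (by omega)]
  refine prod_eval_T_dvd_factorial m (fun i ↦ (hm i).ne') (by positivity)
    (fun i d hd ↦ hsmooth e (by omega) d (hd.trans ?_)) hgrowth
  exact mul_dvd_mul_right (mul_dvd_mul_left 4 (dvd_prod_of_mem m (mem_univ i))) _

theorem stmt_18 (k : ℕ) (hk : 0 < k) (m : Fin k → ℕ) (hm : ∀ i, 0 < m i) :
    ∀ N : ℕ, ∃ n : ℕ, N < n ∧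
      (∏ i, (Polynomial.Chebyshev.T ℤ (m i : ℤ)).eval (n : ℤ)) ∣ (n.factorial : ℤ) :=
  stmt_18_general k m hm
end
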